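/- Let m, k ∈ ℕ with m ≥ 2 and 1 ≤ k ≤ m−1. Let I be a positive nondecreasing function on (0,1) with ∫_0^1 ds/I(s) < ∞, set ψ_I(t) = (∫_0^t dr/I(r))^m, and let N be a rearrangement-invariant function norm on (0,1). Assume there exists a constant C > 0 such that sup_{t∈(0,1)} g*(t) ψ_I(t) ≤ C · N(g) for every nonnegative measurable g on (0,1), where g* denotes the decreasing rearrangement of g. Then there exists a constant C' > 0 such that N((H_I^k h)^{m/(m−k)})^{(m−k)/m} ≤ C' · N(h) for every nonincreasing function h : (0,1) → [0,∞). -/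

import Mathlib

open MeasureTheory ENNReal NNReal

/-- The Hardy-type operator `H_I g (t) = ∫_t^1 g(r)/I(r) dr`, acting on nonnegative
measurable functions on `(0,1)`, realized as `[0,∞]`-valued functions on `ℝ`. -/
noncomputable def HI (I : ℝ → ℝ) (g : ℝ → ℝ≥0∞) : ℝ → ℝ≥0∞ :=
  fun t => ∫⁻ r in Set.Ioo t 1, g r / ENNReal.ofReal (I r)

/-- A rearrangement-invariant function norm on `(0,1)`. -/
structure RINorm where
  N : (ℝ → ℝ≥0∞) → ℝ≥0∞
  eq_zero_iff : ∀ f : ℝ → ℝ≥0∞, Measurable f →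
    (N f = 0 ↔ ∀ᵐ t ∂(volume.restrict (Set.Ioo (0:ℝ) 1)), f t = 0)
  smul_eq : ∀ f : ℝ → ℝ≥0∞, Measurable f → ∀ c : ℝ≥0,
    N (fun t => (c : ℝ≥0∞) * f t) = (c : ℝ≥0∞) * N f
  add_le : ∀ f g : ℝ → ℝ≥0∞, Measurable f → Measurable g →
    N (fun t => f t + g t) ≤ N f + N g
  mono : ∀ f g : ℝ → ℝ≥0∞, Measurable f → Measurable g →
    (∀ᵐ t ∂(volume.restrict (Set.Ioo (0:ℝ) 1)), f t ≤ g t) → N f ≤ N g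
  fatou : ∀ (f : ℕ → ℝ → ℝ≥0∞) (g : ℝ → ℝ≥0∞),
    (∀ j, Measurable (f j)) → Measurable g →
    (∀ j t, f j t ≤ f (j + 1) t) →
    (∀ᵐ t ∂(volume.restrict (Set.Ioo (0:ℝ) 1)), (⨆ j, f j t) = g t) →
    (⨆ j, N (f j)) = N g
  chi_lt_top : N ((Set.Ioo (0:ℝ) 1).indicator fun _ => 1) < ⊤
  lintegral_le : ∃ c : ℝ≥0, 0 < c ∧ ∀ f : ℝ → ℝ≥0∞, Measurable f →
    (∫⁻ t in Set.Ioo (0:ℝ) 1, f t) ≤ (c : ℝ≥0∞) * N f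
  equimeasurable : ∀ f g : ℝ → ℝ≥0∞, Measurable f → Measurable g →
    (∀ lam : ℝ≥0∞, 0 < lam →
      volume {t ∈ Set.Ioo (0:ℝ) 1 | lam < f t}
        = volume {t ∈ Set.Ioo (0:ℝ) 1 | lam < g t}) →
    N f = N g

/-- The decreasing rearrangement on `(0,1)` of a `[0,∞]`-valued function. -/
noncomputable def decRearr (g : ℝ → ℝ≥0∞) (s : ℝ) : ℝ≥0∞ :=
  sInf {lam : ℝ≥0∞ | volume {t ∈ Set.Ioo (0:ℝ) 1 | lam < g t} ≤ ENNReal.ofReal s}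

/-!
Write `B(t) = ∫_0^t dr/I(r) = μ(0,t)`, where `μ` has density `1/I`, so that
`H_I g(t) = ∫_t^1 g dμ`. As `B` is the distribution function of `μ`, `μ{B ≤ x} ≤ x`.
For nonincreasing `g` with `g B^M ≤ E`, split `∫_t^1 g dμ` at the level `B = x`: the lower part
is at most `g(t) x`, and summing over the dyadic shells `{2^l x ≤ B < 2^(l+1) x}` bounds the upper
part by `4 E x^(1-M)`. Choosing `x^M = E / g(t)` gives `(H_I g(t))^M ≤ 5^M E g(t)^(M-1)`.

For nonincreasing `h` we have `h(t) ≤ h*(s)` when `s < t`, so the hypothesis yields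
`h B^m ≤ C N(h)`. Iterating the one-step bound gives `(H_I^k h)^m ≤ 5^(mk) (C N(h))^k h^(m-k)`
pointwise; taking the `(m-k)`-th root and applying `N` proves the claim with
`C' = (5^(mk) C^k)^(1/m)`.
-/

open Set

section DistributionFunction

variable {μ : Measure ℝ} {a b : ℝ}

lemma measurable_measure_Ioo : Measurable fun s => μ (Ioo a s) :=
  Monotone.measurable fun _ _ h => measure_mono (Ioo_subset_Ioo_right h)

lemma measure_Ioo_eq_iSup_Iio (t : ℝ) :
    μ (Ioo a t) = ⨆ s : Iio t, μ (Ioo a s) := by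
  have hUnion : Ioo a t = ⋃ s : Iio t, Ioo a s := by
    ext x
    simp only [mem_Ioo, mem_iUnion, Subtype.exists, mem_Iio, exists_prop]
    refine ⟨fun hx => ?_, fun ⟨s, hst, hx⟩ => ⟨hx.1, hx.2.trans hst⟩⟩
    obtain ⟨s, hxs, hst⟩ := exists_between hx.2
    exact ⟨s, hst, hx.1, hxs⟩
  rw [hUnion]
  exact Monotone.measure_iUnion fun s s' h => Ioo_subset_Ioo_right h

lemma mul_measure_Ioo_pow_le_of_forall_lt {c E : ℝ≥0∞} {m : ℕ} (hm : m ≠ 0) {t : ℝ}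
    (h : ∀ s ∈ Ioo a t, c * μ (Ioo a s) ^ m ≤ E) : c * μ (Ioo a t) ^ m ≤ E := by
  rw [measure_Ioo_eq_iSup_Iio, ENNReal.iSup_pow_of_ne_zero hm, ENNReal.mul_iSup]
  refine iSup_le fun ⟨s, hs⟩ => ?_
  rcases le_or_gt s a with hsa | hsa
  · simp [Ioo_eq_empty_of_le hsa, zero_pow hm]
  · exact h s ⟨hsa, hs⟩

lemma measure_setOf_measure_Ioo_le [NullSingletonClass μ] (x : ℝ≥0∞) :
    μ {s ∈ Ioo a b | μ (Ioo a s) ≤ x} ≤ x := by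
  set T := {s ∈ Ioo a b | μ (Ioo a s) ≤ x}
  rcases T.eq_empty_or_nonempty with hT | hT
  · simp [hT]
  have hbdd : BddAbove T := ⟨b, fun s hs => hs.1.2.le⟩
  calc μ T ≤ μ (Ioc a (sSup T)) := measure_mono fun s hs => ⟨hs.1.1, le_csSup hbdd hs⟩
    _ = μ (Ioo a (sSup T)) := measure_congr Ioo_ae_eq_Ioc.symm
    _ = ⨆ s : Iio (sSup T), μ (Ioo a s) := measure_Ioo_eq_iSup_Iio _
    _ ≤ x := iSup_le fun ⟨s, hs⟩ => by
        obtain ⟨s', hs'T, hss'⟩ := exists_lt_of_lt_csSup hT hs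
        exact (measure_mono (Ioo_subset_Ioo_right hss'.le)).trans hs'T.2

lemma exists_mul_two_pow_le_lt {y z : ℝ≥0∞} (hy : y ≠ 0) (hz : z ≠ ⊤) (hyz : y ≤ z) :
    ∃ l : ℕ, y * 2 ^ l ≤ z ∧ z < y * 2 ^ (l + 1) := by
  lift z to ℝ≥0 using hz
  lift y to ℝ≥0 using ne_top_of_le_ne_top coe_ne_top hyz
  have hy' : 0 < y := pos_iff_ne_zero.mpr (by exact_mod_cast hy)
  obtain ⟨l, hl1, hl2⟩ := exists_nat_pow_near ((one_le_div hy').mpr (by exact_mod_cast hyz))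
    one_lt_two
  refine ⟨l, ?_, ?_⟩
  · exact_mod_cast (le_div_iff₀' hy').mp hl1
  · exact_mod_cast (div_lt_iff₀' hy').mp hl2

lemma div_mul_two_pow_pow_mul_le {E y : ℝ≥0∞} (hy0 : y ≠ 0) (hyt : y ≠ ⊤) {M : ℕ} (hM : 2 ≤ M) (l : ℕ) :
    E / (y * 2 ^ l) ^ M * (y * 2 ^ (l + 1)) ≤ 2 * (E / y ^ (M - 1)) * 2⁻¹ ^ l := by
  set z := y * 2 ^ l
  have hz0 : z ≠ 0 := mul_ne_zero hy0 (pow_ne_zero _ two_ne_zero)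
  have hzt : z ≠ ⊤ := mul_ne_top hyt (pow_ne_top ofNat_ne_top)
  have hzM : z ^ M = z ^ (M - 1) * z := by rw [← pow_succ]; congr 1; omega
  have hgrow : y ^ (M - 1) * 2 ^ l ≤ z ^ (M - 1) := by
    rw [mul_pow, ← pow_mul]
    gcongr
    · norm_num
    · exact Nat.le_mul_of_pos_right l (by omega)
  calc E / z ^ M * (y * 2 ^ (l + 1)) = 2 * (E / z ^ (M - 1)) * (z⁻¹ * z) := by
        rw [hzM, div_eq_mul_inv, div_eq_mul_inv, ENNReal.mul_inv (Or.inr hzt) (Or.inr hz0),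
          pow_succ]
        ring
    _ = 2 * (E / z ^ (M - 1)) := by rw [ENNReal.inv_mul_cancel hz0 hzt, mul_one]
    _ ≤ 2 * (E / (y ^ (M - 1) * 2 ^ l)) := by gcongr
    _ = 2 * (E / y ^ (M - 1)) * 2⁻¹ ^ l := by
        rw [div_eq_mul_inv, div_eq_mul_inv,
          ENNReal.mul_inv (Or.inr (pow_ne_top ofNat_ne_top)) (Or.inr (pow_ne_zero _ two_ne_zero))]
        simp only [ENNReal.inv_pow]
        ring

lemma setLIntegral_setOf_lt_measure_Ioo_le [NullSingletonClass μ] (hμ : μ (Ioo a b) ≠ ⊤)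
    {g : ℝ → ℝ≥0∞} {M : ℕ} (hM : 2 ≤ M) {E y : ℝ≥0∞} (hy0 : y ≠ 0) (hyt : y ≠ ⊤)
    (hg : ∀ s ∈ Ioo a b, g s * μ (Ioo a s) ^ M ≤ E) :
    ∫⁻ s in {s ∈ Ioo a b | y < μ (Ioo a s)}, g s ∂μ ≤ 4 * (E / y ^ (M - 1)) := by
  set B : ℝ → ℝ≥0∞ := fun s => μ (Ioo a s)
  have hB : Measurable B := measurable_measure_Ioo
  set shell : ℕ → Set ℝ := fun l => {s ∈ Ioo a b | y * 2 ^ l ≤ B s ∧ B s < y * 2 ^ (l + 1)}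
  have hcover : {s ∈ Ioo a b | y < B s} ⊆ ⋃ l, shell l := fun s hs => by
    have hBs : B s ≠ ⊤ := ne_top_of_le_ne_top hμ (measure_mono (Ioo_subset_Ioo_right hs.1.2.le))
    obtain ⟨l, hl⟩ := exists_mul_two_pow_le_lt hy0 hBs hs.2.le
    exact mem_iUnion.mpr ⟨l, hs.1, hl⟩
  have hshell : ∀ l, ∫⁻ s in shell l, g s ∂μ ≤ 2 * (E / y ^ (M - 1)) * 2⁻¹ ^ l := fun l => by
    have hz0 : y * 2 ^ l ≠ 0 := mul_ne_zero hy0 (pow_ne_zero _ two_ne_zero)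
    have hzt : y * 2 ^ l ≠ ⊤ := mul_ne_top hyt (pow_ne_top ofNat_ne_top)
    have hmeas : MeasurableSet (shell l) :=
      measurableSet_Ioo.inter ((hB measurableSet_Ici).inter (hB measurableSet_Iio))
    calc ∫⁻ s in shell l, g s ∂μ ≤ ∫⁻ s in shell l, E / (y * 2 ^ l) ^ M ∂μ :=
          setLIntegral_mono' hmeas fun s hs =>
            (ENNReal.le_div_iff_mul_le (Or.inl (pow_ne_zero _ hz0)) (Or.inl (pow_ne_top hzt))).mpr
              (le_trans (by gcongr; exact hs.2.1) (hg s hs.1))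
      _ = E / (y * 2 ^ l) ^ M * μ (shell l) := setLIntegral_const _ _
      _ ≤ E / (y * 2 ^ l) ^ M * (y * 2 ^ (l + 1)) := by
          gcongr
          exact (measure_mono (t := {s ∈ Ioo a b | B s ≤ y * 2 ^ (l + 1)})
            fun s hs => ⟨hs.1, hs.2.2.le⟩).trans (measure_setOf_measure_Ioo_le _)
      _ ≤ 2 * (E / y ^ (M - 1)) * 2⁻¹ ^ l := div_mul_two_pow_pow_mul_le hy0 hyt hM l
  calc ∫⁻ s in {s ∈ Ioo a b | y < B s}, g s ∂μ ≤ ∫⁻ s in ⋃ l, shell l, g s ∂μ :=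
        lintegral_mono_set hcover
    _ ≤ ∑' l, ∫⁻ s in shell l, g s ∂μ := lintegral_iUnion_le _ _
    _ ≤ ∑' l : ℕ, 2 * (E / y ^ (M - 1)) * 2⁻¹ ^ l := ENNReal.tsum_le_tsum hshell
    _ = 4 * (E / y ^ (M - 1)) := by
        rw [ENNReal.tsum_mul_left, ENNReal.tsum_geometric, ENNReal.one_sub_inv_two, inv_inv,
          mul_assoc, mul_comm _ 2, ← mul_assoc]
        norm_num

lemma setLIntegral_Ioo_le_add [NullSingletonClass μ] (hμ : μ (Ioo a b) ≠ ⊤) {g : ℝ → ℝ≥0∞}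
    (hg : AntitoneOn g (Ioo a b)) {M : ℕ} (hM : 2 ≤ M) {E x : ℝ≥0∞} (hx0 : x ≠ 0)
    (hxt : x ≠ ⊤) (hE : ∀ s ∈ Ioo a b, g s * μ (Ioo a s) ^ M ≤ E) {t : ℝ} (ht : t ∈ Ioo a b) :
    ∫⁻ s in Ioo t b, g s ∂μ ≤ g t * x + 4 * (E / x ^ (M - 1)) := by
  have hsub : Ioo t b ⊆ Ioo a b := Ioo_subset_Ioo_left ht.1.le
  set S := {s ∈ Ioo t b | μ (Ioo a s) ≤ x}
  have hS : ∫⁻ s in S, g s ∂μ ≤ g t * x := calc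
      ∫⁻ s in S, g s ∂μ ≤ ∫⁻ _ in S, g t ∂μ :=
        setLIntegral_mono' (measurableSet_Ioo.inter (measurable_measure_Ioo measurableSet_Iic))
          fun s hs => hg ht (hsub hs.1) hs.1.1.le
      _ = g t * μ S := setLIntegral_const _ _
      _ ≤ g t * x := by
        gcongr
        exact (measure_mono (t := {s ∈ Ioo a b | μ (Ioo a s) ≤ x})
          fun s hs => ⟨hsub hs.1, hs.2⟩).trans (measure_setOf_measure_Ioo_le x)
  calc ∫⁻ s in Ioo t b, g s ∂μ ≤ ∫⁻ s in S ∪ {s ∈ Ioo a b | x < μ (Ioo a s)}, g s ∂μ :=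
        lintegral_mono_set fun s hs =>
          (le_or_gt _ x).imp (fun h => ⟨hs, h⟩) (fun h => ⟨hsub hs, h⟩)
    _ ≤ ∫⁻ s in S, g s ∂μ + ∫⁻ s in {s ∈ Ioo a b | x < μ (Ioo a s)}, g s ∂μ :=
        lintegral_union_le _ _ _
    _ ≤ g t * x + 4 * (E / x ^ (M - 1)) :=
        add_le_add hS (setLIntegral_setOf_lt_measure_Ioo_le hμ hM hx0 hxt hE)

lemma setLIntegral_Ioo_pow_le [NullSingletonClass μ] (hμ : μ (Ioo a b) ≠ ⊤) {g : ℝ → ℝ≥0∞}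
    (hg : AntitoneOn g (Ioo a b)) {M : ℕ} (hM : 2 ≤ M) {E : ℝ≥0∞}
    (hE : ∀ s ∈ Ioo a b, g s * μ (Ioo a s) ^ M ≤ E) {t : ℝ} (ht : t ∈ Ioo a b)
    (hBt : μ (Ioo a t) ≠ 0) :
    (∫⁻ s in Ioo t b, g s ∂μ) ^ M ≤ 5 ^ M * E * g t ^ (M - 1) := by
  obtain ⟨N, rfl⟩ : ∃ N, M = N + 2 := ⟨M - 2, by omega⟩
  rcases eq_or_ne (g t) 0 with hgt0 | hgt0
  · have hzero : ∫⁻ s in Ioo t b, g s ∂μ ≤ 0 := calc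
        ∫⁻ s in Ioo t b, g s ∂μ ≤ ∫⁻ _ in Ioo t b, g t ∂μ := setLIntegral_mono' measurableSet_Ioo
          fun s hs => hg ht ⟨ht.1.trans hs.1, hs.2⟩ hs.1.le
        _ = 0 := by simp [hgt0]
    simp [nonpos_iff_eq_zero.mp hzero]
  have hE0 : E ≠ 0 := ne_bot_of_le_ne_bot (mul_ne_zero hgt0 (pow_ne_zero _ hBt)) (hE t ht)
  by_cases htop : g t = ⊤ ∨ E = ⊤
  · rcases htop with htop | htop <;> simp [htop, hgt0, hE0]
  obtain ⟨hgtt, hEt⟩ := not_or.mp htop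
  set x := (E / g t) ^ ((N + 2 : ℕ) : ℝ)⁻¹
  have hx0 : x ≠ 0 := (ENNReal.rpow_pos (ENNReal.div_pos hE0 hgtt)
    (ENNReal.div_ne_top hEt hgt0)).ne'
  have hxt : x ≠ ⊤ := ENNReal.rpow_ne_top_of_nonneg (by positivity) (ENNReal.div_ne_top hEt hgt0)
  have hEx : E = g t * x ^ (N + 2) := by
    rw [ENNReal.rpow_inv_natCast_pow (by omega), ENNReal.mul_div_cancel hgt0 hgtt]
  -- the split point `x` balances the two terms of `setLIntegral_Ioo_le_add`
  have hbal : E / x ^ (N + 2 - 1) = g t * x := by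
    rw [hEx, show N + 2 - 1 = N + 1 by omega, pow_succ', ← mul_assoc,
      ENNReal.mul_div_cancel_right (pow_ne_zero _ hx0) (pow_ne_top hxt)]
  have hint := setLIntegral_Ioo_le_add hμ hg hM hx0 hxt hE ht
  rw [hbal] at hint
  calc (∫⁻ s in Ioo t b, g s ∂μ) ^ (N + 2) ≤ (5 * (g t * x)) ^ (N + 2) := by
        gcongr
        exact hint.trans_eq (by ring)
    _ = 5 ^ (N + 2) * E * g t ^ (N + 2 - 1) := by
        rw [hEx, show N + 2 - 1 = N + 1 by omega]
        ring

end DistributionFunction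

section HardyOperator

variable {I : ℝ → ℝ}

-- An antitone, hence measurable, extension of `1/I` from `(0,1)` to `ℝ`
-- (`I` itself need not be measurable).
noncomputable def hardyDensity (I : ℝ → ℝ) (x : ℝ) : ℝ≥0∞ :=
  ⨅ r ∈ Ioo (0 : ℝ) 1 ∩ Iic x, (ENNReal.ofReal (I r))⁻¹

lemma antitone_hardyDensity (I : ℝ → ℝ) : Antitone (hardyDensity I) :=
  fun _ _ hxy => le_iInf₂ fun r hr => iInf₂_le r ⟨hr.1, hr.2.trans hxy⟩

lemma hardyDensity_eq (hI : MonotoneOn I (Ioo 0 1)) {x : ℝ} (hx : x ∈ Ioo (0 : ℝ) 1) :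
    hardyDensity I x = (ENNReal.ofReal (I x))⁻¹ :=
  le_antisymm (iInf₂_le x ⟨hx, mem_Iic.mpr le_rfl⟩) (le_iInf₂ fun _ hr =>
    ENNReal.inv_le_inv.mpr (ENNReal.ofReal_le_ofReal (hI hr.1 hx hr.2)))

noncomputable def hardyMeasure (I : ℝ → ℝ) : Measure ℝ := volume.withDensity (hardyDensity I)

instance (I : ℝ → ℝ) : NullSingletonClass (hardyMeasure I) :=
  inferInstanceAs (NullSingletonClass (volume.withDensity _))

lemma hardyMeasure_Ioo (hI : MonotoneOn I (Ioo 0 1)) {t : ℝ} (ht : t ≤ 1) :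
    hardyMeasure I (Ioo 0 t) = ∫⁻ r in Ioo 0 t, (ENNReal.ofReal (I r))⁻¹ := by
  rw [hardyMeasure, withDensity_apply _ measurableSet_Ioo]
  exact setLIntegral_congr_fun measurableSet_Ioo fun r hr =>
    hardyDensity_eq hI ⟨hr.1, hr.2.trans_le ht⟩

lemma hardyMeasure_Ioo_ne_zero (hI : MonotoneOn I (Ioo 0 1)) {t : ℝ} (ht : t ∈ Ioo (0 : ℝ) 1) :
    hardyMeasure I (Ioo 0 t) ≠ 0 := by
  rw [hardyMeasure, Ne,
    withDensity_apply_eq_zero' (antitone_hardyDensity I).measurable.aemeasurable,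
    inter_eq_right.mpr]
  · simpa using ht.1
  · intro r hr
    simp [hardyDensity_eq hI ⟨hr.1, hr.2.trans ht.2⟩]

lemma HI_eq_setLIntegral (hI : MonotoneOn I (Ioo 0 1)) {g : ℝ → ℝ≥0∞} (hg : Measurable g)
    {t : ℝ} (ht : 0 ≤ t) : HI I g t = ∫⁻ r in Ioo t 1, g r ∂hardyMeasure I := by
  rw [HI, hardyMeasure, restrict_withDensity measurableSet_Ioo,
    lintegral_withDensity_eq_lintegral_mul _ (antitone_hardyDensity I).measurable hg]
  refine setLIntegral_congr_fun measurableSet_Ioo fun r hr => ?_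
  rw [Pi.mul_apply, hardyDensity_eq hI ⟨ht.trans_lt hr.1, hr.2⟩, div_eq_mul_inv, mul_comm]

lemma antitone_HI (I : ℝ → ℝ) (g : ℝ → ℝ≥0∞) : Antitone (HI I g) :=
  fun _ _ hxy => lintegral_mono_set (Ioo_subset_Ioo_left hxy)

lemma measurable_iterate_HI {h : ℝ → ℝ≥0∞} (hh : Measurable h) :
    ∀ k, Measurable ((HI I)^[k] h)
  | 0 => hh
  | k + 1 => by rw [Function.iterate_succ_apply']; exact (antitone_HI I _).measurable

lemma antitoneOn_iterate_HI {h : ℝ → ℝ≥0∞} (hh : AntitoneOn h (Ioo 0 1)) :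
    ∀ k, AntitoneOn ((HI I)^[k] h) (Ioo 0 1)
  | 0 => hh
  | k + 1 => by rw [Function.iterate_succ_apply']; exact (antitone_HI I _).antitoneOn _

lemma pow_HI_le_of_pow_le (hI : MonotoneOn I (Ioo 0 1))
    (hIint : (∫⁻ s in Ioo (0 : ℝ) 1, (ENNReal.ofReal (I s))⁻¹) < ⊤) {g h : ℝ → ℝ≥0∞}
    (hgm : Measurable g) (hg : AntitoneOn g (Ioo 0 1)) {m j : ℕ} (hm : m ≠ 0) {K D : ℝ≥0∞}
    (hgh : ∀ t ∈ Ioo (0 : ℝ) 1, g t ^ m ≤ K * h t ^ (j + 2))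
    (hD : ∀ t ∈ Ioo (0 : ℝ) 1, h t * hardyMeasure I (Ioo 0 t) ^ m ≤ D)
    {t : ℝ} (ht : t ∈ Ioo (0 : ℝ) 1) :
    HI I g t ^ m ≤ 5 ^ m * K * D * h t ^ (j + 1) := by
  have hE : ∀ s ∈ Ioo (0 : ℝ) 1,
      g s * hardyMeasure I (Ioo 0 s) ^ (j + 2) ≤ (K * D ^ (j + 2)) ^ (m⁻¹ : ℝ) := by
    intro s hs
    rw [← ENNReal.pow_rpow_inv_natCast hm (g s * _)]
    gcongr
    calc (g s * hardyMeasure I (Ioo 0 s) ^ (j + 2)) ^ m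
        = g s ^ m * (hardyMeasure I (Ioo 0 s) ^ m) ^ (j + 2) := by ring
      _ ≤ K * h s ^ (j + 2) * (hardyMeasure I (Ioo 0 s) ^ m) ^ (j + 2) := by
          gcongr; exact hgh s hs
      _ = K * (h s * hardyMeasure I (Ioo 0 s) ^ m) ^ (j + 2) := by ring
      _ ≤ K * D ^ (j + 2) := by gcongr; exact hD s hs
  have hstep := setLIntegral_Ioo_pow_le (hardyMeasure_Ioo hI le_rfl ▸ hIint.ne) hg
    (by omega) hE ht (hardyMeasure_Ioo_ne_zero hI ht)
  rw [← HI_eq_setLIntegral hI hgm ht.1.le, show j + 2 - 1 = j + 1 by omega] at hstep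
  rw [← ENNReal.pow_le_pow_left_iff (n := j + 2) (by omega)]
  calc (HI I g t ^ m) ^ (j + 2) = (HI I g t ^ (j + 2)) ^ m := by ring
    _ ≤ (5 ^ (j + 2) * (K * D ^ (j + 2)) ^ (m⁻¹ : ℝ) * g t ^ (j + 1)) ^ m := by gcongr
    _ = (5 ^ m) ^ (j + 2) * (K * D ^ (j + 2)) * (g t ^ m) ^ (j + 1) := by
        rw [mul_pow, mul_pow, ENNReal.rpow_inv_natCast_pow hm, pow_right_comm]; ring
    _ ≤ (5 ^ m) ^ (j + 2) * (K * D ^ (j + 2)) * (K * h t ^ (j + 2)) ^ (j + 1) := by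
        gcongr; exact hgh t ht
    _ = (5 ^ m * K * D * h t ^ (j + 1)) ^ (j + 2) := by ring

lemma pow_iterate_HI_le (hI : MonotoneOn I (Ioo 0 1))
    (hIint : (∫⁻ s in Ioo (0 : ℝ) 1, (ENNReal.ofReal (I s))⁻¹) < ⊤) {h : ℝ → ℝ≥0∞}
    (hh : Measurable h) (hanti : AntitoneOn h (Ioo 0 1)) {m : ℕ} {D : ℝ≥0∞}
    (hD : ∀ t ∈ Ioo (0 : ℝ) 1, h t * hardyMeasure I (Ioo 0 t) ^ m ≤ D) {i : ℕ} (hi : i < m)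
    {t : ℝ} (ht : t ∈ Ioo (0 : ℝ) 1) :
    (HI I)^[i] h t ^ m ≤ 5 ^ (m * i) * D ^ i * h t ^ (m - i) := by
  induction i generalizing t with
  | zero => simp
  | succ i ih =>
    obtain ⟨j, hj⟩ : ∃ j, m - i = j + 2 := ⟨m - i - 2, by omega⟩
    rw [Function.iterate_succ_apply', show m - (i + 1) = j + 1 by omega]
    calc HI I ((HI I)^[i] h) t ^ m ≤ 5 ^ m * (5 ^ (m * i) * D ^ i) * D * h t ^ (j + 1) :=
          pow_HI_le_of_pow_le hI hIint (measurable_iterate_HI hh i) (antitoneOn_iterate_HI hanti i)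
            (by omega) (fun s hs => hj ▸ ih (by omega) hs) hD ht
      _ = 5 ^ (m * (i + 1)) * D ^ (i + 1) * h t ^ (j + 1) := by ring

lemma le_decRearr_of_antitoneOn {h : ℝ → ℝ≥0∞} (hanti : AntitoneOn h (Ioo 0 1)) {s t : ℝ}
    (ht : t ∈ Ioo (0 : ℝ) 1) (hst : s < t) : h t ≤ decRearr h s := by
  refine le_sInf fun lam hlam => not_lt.mp fun hlt => ?_
  have hsub : Ioo 0 t ⊆ {x ∈ Ioo (0 : ℝ) 1 | lam < h x} := fun x hx =>
    ⟨⟨hx.1, hx.2.trans ht.2⟩, hlt.trans_le (hanti ⟨hx.1, hx.2.trans ht.2⟩ ht hx.2.le)⟩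
  have hts : ENNReal.ofReal t ≤ ENNReal.ofReal s := by
    simpa using (measure_mono hsub).trans hlam
  rcases ENNReal.ofReal_le_ofReal_iff'.mp hts with hle | hle <;> linarith [ht.1]

lemma mul_hardyMeasure_pow_le_of_decRearr (hI : MonotoneOn I (Ioo 0 1)) {h : ℝ → ℝ≥0∞}
    (hanti : AntitoneOn h (Ioo 0 1)) {m : ℕ} (hm : m ≠ 0) {E : ℝ≥0∞}
    (hE : ∀ s ∈ Ioo (0 : ℝ) 1,
      decRearr h s * (∫⁻ r in Ioo (0 : ℝ) s, (ENNReal.ofReal (I r))⁻¹) ^ m ≤ E)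
    {t : ℝ} (ht : t ∈ Ioo (0 : ℝ) 1) : h t * hardyMeasure I (Ioo 0 t) ^ m ≤ E :=
  mul_measure_Ioo_pow_le_of_forall_lt hm fun s hs => by
    have hs1 : s ∈ Ioo (0 : ℝ) 1 := ⟨hs.1, hs.2.trans ht.2⟩
    rw [hardyMeasure_Ioo hI hs1.2.le]
    exact le_trans (by gcongr; exact le_decRearr_of_antitoneOn hanti ht hs.2) (hE s hs1)

end HardyOperator

namespace RINorm

lemma N_le_mul_of_le (X : RINorm) {f g : ℝ → ℝ≥0∞} (hf : Measurable f) (hg : Measurable g)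
    {c : ℝ≥0∞} (hc : c ≠ ⊤) (hfg : ∀ t ∈ Ioo (0 : ℝ) 1, f t ≤ c * g t) :
    X.N f ≤ c * X.N g := by
  lift c to ℝ≥0 using hc
  rw [← X.smul_eq g hg c]
  exact X.mono _ _ hf (hg.const_mul _) ((ae_restrict_iff' measurableSet_Ioo).mpr (ae_of_all _ hfg))

lemma rpow_N_rpow_le (X : RINorm) {f h : ℝ → ℝ≥0∞} (hf : Measurable f) (hh : Measurable h)
    {m k : ℕ} (hkm : k < m) {K : ℝ≥0} (hK : K ≠ 0)
    (hfh : ∀ t ∈ Ioo (0 : ℝ) 1, f t ^ m ≤ K * X.N h ^ k * h t ^ (m - k)) :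
    (X.N fun t => f t ^ ((m : ℝ) / ((m : ℝ) - (k : ℝ)))) ^ (((m : ℝ) - (k : ℝ)) / (m : ℝ))
      ≤ ((K ^ (m⁻¹ : ℝ) : ℝ≥0) : ℝ≥0∞) * X.N h := by
  set a := X.N h
  rcases eq_or_ne a ⊤ with ha | ha
  · rw [ha, ENNReal.mul_top (coe_ne_zero.mpr (NNReal.rpow_pos (pos_iff_ne_zero.mpr hK)).ne')]
    exact le_top
  have hm : m ≠ 0 := by omega
  set n := m - k with hn_def
  have hn : n ≠ 0 := by omega
  rw [show (m : ℝ) - k = n by rw [hn_def, Nat.cast_sub hkm.le]]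
  set c := ((K : ℝ≥0∞) * a ^ k) ^ (n⁻¹ : ℝ)
  have hc : c ≠ ⊤ := ENNReal.rpow_ne_top_of_nonneg (by positivity)
    (mul_ne_top coe_ne_top (pow_ne_top ha))
  have hpt : ∀ t ∈ Ioo (0 : ℝ) 1, f t ^ ((m : ℝ) / n) ≤ c * h t := fun t ht => calc
    f t ^ ((m : ℝ) / n) = (f t ^ m) ^ (n⁻¹ : ℝ) := by
      rw [div_eq_mul_inv, ENNReal.rpow_mul, ENNReal.rpow_natCast]
    _ ≤ (K * a ^ k * h t ^ n) ^ (n⁻¹ : ℝ) := by gcongr; exact hfh t ht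
    _ = c * h t := by
      rw [ENNReal.mul_rpow_of_nonneg _ _ (by positivity), ENNReal.pow_rpow_inv_natCast hn]
  have hN := X.N_le_mul_of_le (hf.pow_const _) hh hc hpt
  set Y := (X.N fun t => f t ^ ((m : ℝ) / n)) ^ ((n : ℝ) / m)
  have hY : Y ^ m ≤ K * a ^ m := calc
    Y ^ m = (X.N fun t => f t ^ ((m : ℝ) / n)) ^ n := by
      rw [← ENNReal.rpow_natCast, ← ENNReal.rpow_mul, div_mul_cancel₀ _ (by exact_mod_cast hm),
        ENNReal.rpow_natCast]
    _ ≤ (c * a) ^ n := by gcongr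
    _ = K * a ^ m := by
      rw [mul_pow, ENNReal.rpow_inv_natCast_pow hn, mul_assoc, ← pow_add,
        Nat.add_sub_cancel' hkm.le]
  calc Y = (Y ^ m) ^ (m⁻¹ : ℝ) := (ENNReal.pow_rpow_inv_natCast hm _).symm
    _ ≤ (K * a ^ m) ^ (m⁻¹ : ℝ) := by gcongr
    _ = ((K ^ (m⁻¹ : ℝ) : ℝ≥0) : ℝ≥0∞) * a := by
      rw [ENNReal.mul_rpow_of_nonneg _ _ (by positivity), ENNReal.pow_rpow_inv_natCast hm,
        ENNReal.coe_rpow_of_nonneg _ (by positivity)]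

end RINorm

theorem hardy_iterate_into_power_space_general (m k : ℕ) (hm : 2 ≤ m)
    (hk2 : k ≤ m - 1) (I : ℝ → ℝ)
    (hImono : MonotoneOn I (Set.Ioo (0:ℝ) 1))
    (hIint : (∫⁻ s in Set.Ioo (0:ℝ) 1, (ENNReal.ofReal (I s))⁻¹) < ⊤)
    (X : RINorm) (C : ℝ≥0) (hC : 0 < C)
    (hmarc : ∀ g : ℝ → ℝ≥0∞, Measurable g → ∀ t ∈ Set.Ioo (0:ℝ) 1,
      decRearr g t * (∫⁻ r in Set.Ioo (0:ℝ) t, (ENNReal.ofReal (I r))⁻¹) ^ m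
        ≤ (C : ℝ≥0∞) * X.N g) :
    ∃ C' : ℝ≥0, 0 < C' ∧
      ∀ h : ℝ → ℝ≥0∞, Measurable h → AntitoneOn h (Set.Ioo (0:ℝ) 1) →
        (X.N fun t => ((HI I)^[k] h t) ^ ((m : ℝ) / ((m : ℝ) - (k : ℝ)))) ^
            (((m : ℝ) - (k : ℝ)) / (m : ℝ))
          ≤ (C' : ℝ≥0∞) * X.N h := by
  have hkm : k < m := by omega
  have hK : 5 ^ (m * k) * C ^ k ≠ 0 := by positivity
  refine ⟨(5 ^ (m * k) * C ^ k) ^ (m⁻¹ : ℝ), by positivity, fun h hh hanti => ?_⟩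
  have hD : ∀ t ∈ Ioo (0 : ℝ) 1, h t * hardyMeasure I (Ioo 0 t) ^ m ≤ C * X.N h :=
    fun t ht => mul_hardyMeasure_pow_le_of_decRearr hImono hanti (by omega) (hmarc h hh) ht
  refine X.rpow_N_rpow_le (measurable_iterate_HI hh k) hh hkm hK fun t ht => ?_
  calc (HI I)^[k] h t ^ m ≤ 5 ^ (m * k) * (C * X.N h) ^ k * h t ^ (m - k) :=
        pow_iterate_HI_le hImono hIint hh hanti hD hkm ht
    _ = ↑(5 ^ (m * k) * C ^ k) * X.N h ^ k * h t ^ (m - k) := by push_cast; ring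

/-- if `sup_t g*(t) ψ_I(t) ≤ C N(g)`, then
`N((H_I^k h)^{m/(m-k)})^{(m-k)/m} ≤ C' N(h)` for nonincreasing `h`. -/
theorem hardy_iterate_into_power_space (m k : ℕ) (hm : 2 ≤ m) (hk1 : 1 ≤ k)
    (hk2 : k ≤ m - 1) (I : ℝ → ℝ)
    (hIpos : ∀ t ∈ Set.Ioo (0:ℝ) 1, 0 < I t)
    (hImono : MonotoneOn I (Set.Ioo (0:ℝ) 1))
    (hIint : (∫⁻ s in Set.Ioo (0:ℝ) 1, (ENNReal.ofReal (I s))⁻¹) < ⊤)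
    (X : RINorm) (C : ℝ≥0) (hC : 0 < C)
    (hmarc : ∀ g : ℝ → ℝ≥0∞, Measurable g → ∀ t ∈ Set.Ioo (0:ℝ) 1,
      decRearr g t * (∫⁻ r in Set.Ioo (0:ℝ) t, (ENNReal.ofReal (I r))⁻¹) ^ m
        ≤ (C : ℝ≥0∞) * X.N g) :
    ∃ C' : ℝ≥0, 0 < C' ∧
      ∀ h : ℝ → ℝ≥0∞, Measurable h → AntitoneOn h (Set.Ioo (0:ℝ) 1) →
        (X.N fun t => ((HI I)^[k] h t) ^ ((m : ℝ) / ((m : ℝ) - (k : ℝ)))) ^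
            (((m : ℝ) - (k : ℝ)) / (m : ℝ))
          ≤ (C' : ℝ≥0∞) * X.N h :=
  hardy_iterate_into_power_space_general m k hm hk2 I hImono hIint X C hC hmarc
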